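/- Let n ≥ 3, let κ, κ_4, …, κ_n be real numbers, and let S be the linear endomorphism of an n-dimensional real vector space defined on a basis (E_1, …, E_n) by S E_1 = κ E_1 − E_3, S E_2 = κ E_2, S E_3 = E_2 + κ E_3, and S E_i = κ_i E_i for i ≥ 4. Set κ_1 = κ_2 = κ_3 = κ. Then for every k = 0, …, n the Newton transformation satisfies: P_k E_1 = (−1)^k (μ_k^{\{1\}} E_1 − μ_{k−2}^{\{1,2,3\}} E_2 + μ_{k−1}^{\{1,2\}} E_3), P_k E_2 = (−1)^k μ_k^{\{1\}} E_2, P_k E_3 = (−1)^k (−μ_{k−1}^{\{1,2\}} E_2 + μ_k^{\{1\}} E_3), and P_k E_i = (−1)^k μ_k^{\{i\}} E_i for every i ≥ 4. -/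

import Mathlib

/-- `mu κ J k` is the `k`-th elementary symmetric function of the values `κ i`
with indices `i` outside `J`, with the conventions `mu κ J 0 = 1` and
`mu κ J k = 0` for `k < 0`. -/
noncomputable def mu {n : ℕ} (κ : Fin n → ℝ) (J : Finset (Fin n)) (k : ℤ) : ℝ :=
  if k < 0 then 0
  else ∑ T ∈ (Finset.univ \ J).powersetCard k.toNat, ∏ i ∈ T, κ i

/-!
The matrix of `S` becomes upper triangular once `E_1, E_2, E_3` are reordered as
`E_2, E_3, E_1`, so its characteristic polynomial is `∏ i, (X - κ_i)` and, by Vieta,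
`a_k = (-1)^k μ_k^∅`. The Newton transformations satisfy `P_{k+1} = a_{k+1} + S P_k`, and the
stated formulas follow by induction on `k` from the Pascal-type rule
`μ_k^J = μ_k^{J ∪ {i}} + κ_i μ_{k-1}^{J ∪ {i}}`, applied once for an eigenvector and along the
chain `J = ∅ ⊂ {1} ⊂ {1,2} ⊂ {1,2,3}` for `E_3` and `E_1`.
-/

open Polynomial Finset

theorem Multiset.esymm_cons_succ {R : Type*} [CommSemiring R] (a : R) (s : Multiset R) (k : ℕ) :
    (a ::ₘ s).esymm (k + 1) = s.esymm (k + 1) + a * s.esymm k := by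
  simp [Multiset.esymm, Multiset.powersetCard_cons, Multiset.sum_map_mul_left]

section mu

variable {n : ℕ} (κ : Fin n → ℝ) (J : Finset (Fin n))

theorem mu_of_neg {k : ℤ} (hk : k < 0) : mu κ J k = 0 := if_pos hk

@[simp]
theorem mu_zero : mu κ J 0 = 1 := by simp [mu]

theorem mu_natCast (k : ℕ) : mu κ J k = ((univ \ J).val.map κ).esymm k := by
  rw [mu, if_neg (by omega), Int.toNat_natCast, Finset.esymm_map_val]

variable {J} {i : Fin n}

theorem mu_succ_eq_mu_insert_add_mul (hi : i ∉ J) (k : ℕ) :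
    mu κ J (k + 1 : ℕ) = mu κ (insert i J) (k + 1 : ℕ) + κ i * mu κ (insert i J) k := by
  have hval : (univ \ J).val = i ::ₘ (univ \ insert i J).val := by
    rw [sdiff_insert, erase_val, Multiset.cons_erase (mem_sdiff.2 ⟨mem_univ i, hi⟩)]
  rw [mu_natCast, mu_natCast, mu_natCast, hval, Multiset.map_cons, Multiset.esymm_cons_succ]

theorem mu_eq_mu_insert_add_mul (hi : i ∉ J) (k : ℤ) :
    mu κ J k = mu κ (insert i J) k + κ i * mu κ (insert i J) (k - 1) := by
  by_cases hk : k < 0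
  · simp [mu_of_neg, hk, show k - 1 < 0 by omega]
  lift k to ℕ using not_lt.1 hk
  cases k with
  | zero => simp [mu_of_neg]
  | succ k => simpa using mu_succ_eq_mu_insert_add_mul κ hi k

end mu

theorem coeff_prod_X_sub_C_eq_mu {n : ℕ} (κ : Fin n → ℝ) {k : ℕ} (hk : k ≤ n) :
    (∏ i, (X - C (κ i))).coeff (n - k) = (-1) ^ k * mu κ ∅ k := by
  have := Multiset.prod_X_sub_C_coeff (univ.val.map κ) (k := n - k) (by simp)
  simp only [Multiset.map_map, Multiset.card_map, card_val, card_univ, Fintype.card_fin,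
    Nat.sub_sub_self hk] at this
  rw [Finset.prod_eq_multiset_prod, mu_natCast, sdiff_empty]
  exact this

theorem LinearMap.charpoly_eq_prod_of_triangular {R M ι : Type*} [CommRing R] [AddCommGroup M]
    [Module R M] [Module.Free R M] [Module.Finite R M] [Fintype ι] [DecidableEq ι] [LinearOrder ι]
    (b : Module.Basis ι R M) (f : M →ₗ[R] M) (d : ι → R)
    (h : ∀ j, f (b j) - d j • b j ∈ Submodule.span R (b '' Set.Iio j)) :
    f.charpoly = ∏ j, (X - C (d j)) := by
  have hrepr : ∀ i j, j ≤ i → b.repr (f (b j)) i = Finsupp.single j (d j) i := by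
    intro i j hji
    have hi : i ∉ (b.repr (f (b j) - d j • b j)).support := fun hi =>
      (not_lt.2 hji) ((b.mem_span_image.1 (h j)) hi)
    simpa [sub_eq_zero] using hi
  rw [← LinearMap.charpoly_toMatrix f b, Matrix.charpoly_of_isUpperTriangular]
  · simp [LinearMap.toMatrix_apply, hrepr]
  · intro i j hij
    rw [LinearMap.toMatrix_apply, hrepr i j hij.le]
    exact Finsupp.single_eq_of_ne hij.ne'

theorem charpoly_eq_prod_of_typeIV {V : Type*} [AddCommGroup V] [Module ℝ V]
    [FiniteDimensional ℝ V] {n : ℕ} {κ : Fin n → ℝ} {i₀ i₁ i₂ : Fin n}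
    (h₀ : (i₀ : ℕ) = 0) (h₁ : (i₁ : ℕ) = 1) (h₂ : (i₂ : ℕ) = 2)
    (hκ₁ : κ i₀ = κ i₁) (hκ₂ : κ i₀ = κ i₂) (E : Module.Basis (Fin n) ℝ V) {S : V →ₗ[ℝ] V}
    (hS₀ : S (E i₀) = κ i₀ • E i₀ - E i₂) (hS₁ : S (E i₁) = κ i₀ • E i₁)
    (hS₂ : S (E i₂) = E i₁ + κ i₀ • E i₂)
    (hSi : ∀ i : Fin n, 3 ≤ (i : ℕ) → S (E i) = κ i • E i) :
    S.charpoly = ∏ i, (X - C (κ i)) := by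
  -- In the basis `E i₁, E i₂, E i₀, E 3, …` the matrix of `S` is upper triangular.
  set c := Fin.cycleRange i₂
  have hc₀ : c i₀ = i₁ :=
    Fin.ext <| by rw [Fin.coe_cycleRange_of_lt (by rw [Fin.lt_def]; omega)]; omega
  have hc₁ : c i₁ = i₂ :=
    Fin.ext <| by rw [Fin.coe_cycleRange_of_lt (by rw [Fin.lt_def]; omega)]; omega
  have hc₂ : c i₂ = i₀ := Fin.ext <| by rw [Fin.coe_cycleRange_of_le le_rfl, if_pos rfl, h₀]
  have hc : ∀ j : Fin n, 3 ≤ (j : ℕ) → c j = j := fun j hj =>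
    Fin.cycleRange_of_gt (by rw [Fin.lt_def]; omega)
  clear_value c
  set F := E.reindex c.symm
  have hF : ∀ j, F j = E (c j) := fun j => by simp [F]
  refine (LinearMap.charpoly_eq_prod_of_triangular F S (κ ∘ c) fun j => ?_).trans
    (Equiv.prod_comp c fun i => X - C (κ i))
  rw [hF, Function.comp_apply]
  obtain rfl | rfl | rfl | hj : i₀ = j ∨ i₁ = j ∨ i₂ = j ∨ 3 ≤ (j : ℕ) := by
    simp only [Fin.ext_iff]; omega
  · rw [hc₀, hS₁, hκ₁, sub_self]
    exact zero_mem _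
  · rw [hc₁, hS₂, ← hκ₂, add_sub_cancel_right]
    exact Submodule.subset_span ⟨i₀, by rw [Set.mem_Iio, Fin.lt_def]; omega, by rw [hF, hc₀]⟩
  · rw [hc₂, hS₀, sub_sub_cancel_left]
    exact neg_mem <|
      Submodule.subset_span ⟨i₁, by rw [Set.mem_Iio, Fin.lt_def]; omega, by rw [hF, hc₁]⟩
  · rw [hc j hj, hSi j hj, sub_self]
    exact zero_mem _

theorem sum_range_succ_smul_pow {R A : Type*} [CommSemiring R] [Semiring A]
    [Algebra R A] (a : ℕ → R) (s : A) (k : ℕ) :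
    ∑ j ∈ range (k + 1 + 1), a (k + 1 - j) • s ^ j =
      a (k + 1) • 1 + s * ∑ j ∈ range (k + 1), a (k - j) • s ^ j := by
  rw [sum_range_succ', mul_sum, add_comm]
  simp [pow_succ']

section NewtonTransformation

/- `P` satisfies the recurrence of the Newton transformations of an `S` whose characteristic
polynomial is `∏ i, (X - C (κ i))`. -/
variable {V : Type*} [AddCommGroup V] [Module ℝ V] {n : ℕ} {κ : Fin n → ℝ} {S : V →ₗ[ℝ] V}
  {P : ℕ → V →ₗ[ℝ] V} (hP0 : ∀ v, P 0 v = v)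
  (hP : ∀ k < n, ∀ v, P (k + 1) v = ((-1) ^ (k + 1) * mu κ ∅ (k + 1 : ℕ)) • v + S (P k v))
include hP0 hP

theorem newton_apply_of_eigenvector {i : Fin n} {v : V} (hv : S v = κ i • v) :
    ∀ k ≤ n, P k v = ((-1) ^ k * mu κ {i} k) • v := by
  intro k
  induction k with
  | zero => simp [hP0]
  | succ k ih =>
    intro (hk : k < n)
    have hrec := mu_succ_eq_mu_insert_add_mul κ (J := ∅) (notMem_empty i) k
    rw [hP k hk, ih hk.le, map_smul, hv, smul_smul, ← add_smul]
    simp only [insert_empty_eq] at hrec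
    congr 1
    linear_combination (-1) ^ (k + 1) * hrec

theorem newton_apply_of_jordan_chain₂ {i j : Fin n} (hij : i ≠ j) (hκ : κ i = κ j) {u w : V}
    (hu : S u = κ i • u) (hw : S w = u + κ i • w) :
    ∀ k ≤ n, P k w = ((-1) ^ k * -mu κ {i, j} (k - 1)) • u + ((-1) ^ k * mu κ {i} k) • w := by
  intro k
  induction k with
  | zero => simp [hP0, mu_of_neg]
  | succ k ih =>
    intro (hk : k < n)
    have hrec₀ := mu_succ_eq_mu_insert_add_mul κ (J := ∅) (notMem_empty i) k
    have hrec₁ := mu_eq_mu_insert_add_mul κ (J := {i}) (i := j) (by simpa using hij.symm) k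
    simp only [insert_empty_eq, Nat.cast_succ] at hrec₀
    rw [pair_comm] at hrec₁
    rw [hP k hk, ih hk.le, map_add, map_smul, map_smul, hu, hw]
    push_cast
    rw [add_sub_cancel_right]
    match_scalars
    · linear_combination (-1) ^ (k + 1) * hrec₀
    · linear_combination (-1) ^ k * hrec₁ + (-1) ^ (k + 1) * mu κ {i, j} (k - 1) * hκ

theorem newton_apply_of_jordan_chain₃ {i j l : Fin n} (hij : i ≠ j) (hil : i ≠ l) (hjl : j ≠ l)
    (hκj : κ i = κ j) (hκl : κ i = κ l) {u v w : V}
    (hu : S u = κ i • u - w) (hv : S v = κ i • v) (hw : S w = v + κ i • w) :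
    ∀ k ≤ n, P k u = ((-1) ^ k * mu κ {i} k) • u + ((-1) ^ k * -mu κ {i, j, l} (k - 2)) • v +
      ((-1) ^ k * mu κ {i, j} (k - 1)) • w := by
  intro k
  induction k with
  | zero => simp [hP0, mu_of_neg]
  | succ k ih =>
    intro (hk : k < n)
    have hrec₀ := mu_succ_eq_mu_insert_add_mul κ (J := ∅) (notMem_empty i) k
    have hrec₁ := mu_eq_mu_insert_add_mul κ (J := {i}) (i := j) (by simpa using hij.symm) k
    have hrec₂ := mu_eq_mu_insert_add_mul κ (J := {i, j}) (i := l)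
      (by simp [hil.symm, hjl.symm]) (k - 1)
    simp only [insert_empty_eq, Nat.cast_succ] at hrec₀
    rw [pair_comm] at hrec₁
    rw [show insert l {i, j} = ({i, j, l} : Finset (Fin n)) by ext; simp; tauto,
      show (k : ℤ) - 1 - 1 = k - 2 by ring] at hrec₂
    rw [hP k hk, ih hk.le, map_add, map_add, map_smul, map_smul, map_smul, hu, hv, hw]
    push_cast
    rw [add_sub_cancel_right, show (k : ℤ) + 1 - 2 = k - 1 by ring]
    match_scalars
    · linear_combination (-1) ^ (k + 1) * hrec₀
    · linear_combination (-1) ^ (k + 1) * hrec₁ + (-1) ^ k * mu κ {i, j} (k - 1) * hκj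
    · linear_combination (-1) ^ k * hrec₂ + (-1) ^ (k + 1) * mu κ {i, j, l} (k - 2) * hκl

end NewtonTransformation

/-- The paper's `E_1, E_2, E_3` and `E_i` (`i ≥ 4`) are `E 0, E 1, E 2` and `E i` (`i ≥ 3`). -/
theorem newton_transformation_type_IV
    (V : Type*) [AddCommGroup V] [Module ℝ V] [FiniteDimensional ℝ V]
    (n : ℕ) (hn : 3 ≤ n)
    (κ : Fin n → ℝ)
    (hκ1 : κ ⟨0, by omega⟩ = κ ⟨1, by omega⟩)
    (hκ2 : κ ⟨0, by omega⟩ = κ ⟨2, by omega⟩)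
    (E : Module.Basis (Fin n) ℝ V)
    (S : V →ₗ[ℝ] V)
    (hS0 : S (E ⟨0, by omega⟩) = κ ⟨0, by omega⟩ • E ⟨0, by omega⟩ - E ⟨2, by omega⟩)
    (hS1 : S (E ⟨1, by omega⟩) = κ ⟨0, by omega⟩ • E ⟨1, by omega⟩)
    (hS2 : S (E ⟨2, by omega⟩) = E ⟨1, by omega⟩ + κ ⟨0, by omega⟩ • E ⟨2, by omega⟩)
    (hSi : ∀ i : Fin n, 3 ≤ (i : ℕ) → S (E i) = κ i • E i)
    (a : ℕ → ℝ) (ha : ∀ k, a k = (LinearMap.charpoly S).coeff (n - k))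
    (P : ℕ → V →ₗ[ℝ] V)
    (hP : ∀ k, P k = ∑ j ∈ Finset.range (k + 1), a (k - j) • S ^ j) :
    ∀ k ≤ n,
      P k (E ⟨0, by omega⟩) =
          ((-1 : ℝ) ^ k * mu κ {⟨0, by omega⟩} (k : ℤ)) • E ⟨0, by omega⟩ +
          ((-1 : ℝ) ^ k *
              (-mu κ {⟨0, by omega⟩, ⟨1, by omega⟩, ⟨2, by omega⟩} ((k : ℤ) - 2))) •
            E ⟨1, by omega⟩ +
          ((-1 : ℝ) ^ k * mu κ {⟨0, by omega⟩, ⟨1, by omega⟩} ((k : ℤ) - 1)) •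
            E ⟨2, by omega⟩ ∧
      P k (E ⟨1, by omega⟩) =
          ((-1 : ℝ) ^ k * mu κ {⟨0, by omega⟩} (k : ℤ)) • E ⟨1, by omega⟩ ∧
      P k (E ⟨2, by omega⟩) =
          ((-1 : ℝ) ^ k * (-mu κ {⟨0, by omega⟩, ⟨1, by omega⟩} ((k : ℤ) - 1))) •
            E ⟨1, by omega⟩ +
          ((-1 : ℝ) ^ k * mu κ {⟨0, by omega⟩} (k : ℤ)) • E ⟨2, by omega⟩ ∧
      ∀ i : Fin n, 3 ≤ (i : ℕ) →
        P k (E i) = ((-1 : ℝ) ^ k * mu κ {i} (k : ℤ)) • E i := by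
  have hchar := charpoly_eq_prod_of_typeIV rfl rfl rfl hκ1 hκ2 E hS0 hS1 hS2 hSi
  have hP0 : ∀ v, P 0 v = v := by
    have hlead := coeff_prod_X_sub_C_eq_mu κ (Nat.zero_le n)
    rw [Nat.sub_zero, Nat.cast_zero, mu_zero, pow_zero, mul_one] at hlead
    simp [hP, ha, hchar, hlead]
  have hPsucc : ∀ k < n, ∀ v,
      P (k + 1) v = ((-1) ^ (k + 1) * mu κ ∅ (k + 1 : ℕ)) • v + S (P k v) := by
    intro k hk v
    rw [hP, hP, sum_range_succ_smul_pow, ha, hchar, coeff_prod_X_sub_C_eq_mu κ hk]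
    simp
  intro k hk
  refine ⟨?_, newton_apply_of_eigenvector hP0 hPsucc hS1 k hk, ?_,
    fun i hi => newton_apply_of_eigenvector hP0 hPsucc (hSi i hi) k hk⟩
  · exact newton_apply_of_jordan_chain₃ hP0 hPsucc (by simp) (by simp) (by simp) hκ1 hκ2
      hS0 hS1 hS2 k hk
  · exact newton_apply_of_jordan_chain₂ hP0 hPsucc (by simp) hκ1 hS1 hS2 k hk
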